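/- Let $1 < p < N$ and let $g \in L^1((1,\infty); r^{p-1}\,dr)$ be a nonnegative function, i.e. $\int_1^\infty g(r) r^{p-1}\,dr < \infty$. Then there is a constant $C = \left(\frac{p-1}{N-p}\right)^{p-1}$ such that for every compactly supported $C^1$ function $\phi$ on $\overline{B_1^c} = \{x \in \mathbb{R}^N : |x| \geq 1\}$, $\int_{B_1^c} g(|x|) |\phi(x)|^p \, dx \leq C \left( \int_1^\infty g(r) r^{p-1}\,dr \right) \int_{B_1^c} |\nabla \phi(x)|^p \, dx$. -/

import Mathlib

/-
Along a ray `t ↦ t • ω`, `‖ω‖ = 1`, the compactly supported `φ` satisfies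
`|φ (r • ω)| ≤ ∫_r^∞ ‖∇φ (t • ω)‖ dt`. Hölder's inequality against the weight `t ^ ((N - 1) / p)`
turns this into `|φ (r • ω)|^p ≤ C r^(p - N) ∫_r^∞ t^(N - 1) ‖∇φ (t • ω)‖^p dt`, where
`C = ((p - 1) / (N - p))^(p - 1)` comes from `∫_r^∞ t^(-(N - 1) / (p - 1)) dt`.
Multiplying by `g r r^(N - 1)`, enlarging the inner integral to `∫_1^∞`, integrating over `r > 1`
and then over the unit sphere in polar coordinates gives the inequality.
-/

open MeasureTheory Set Metric Filter
open scoped ENNReal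

theorem ofReal_norm_rpow {E : Type*} [NormedAddCommGroup E] (x : E) {p : ℝ} (hp : 0 ≤ p) :
    ENNReal.ofReal (‖x‖ ^ p) = ‖x‖ₑ ^ p := by
  rw [← ENNReal.ofReal_rpow_of_nonneg (norm_nonneg x) hp, ofReal_norm]

theorem Continuous.ofReal_setIntegral_norm_rpow {X F : Type*} [TopologicalSpace X]
    [MeasurableSpace X] [OpensMeasurableSpace X] {μ : Measure X} [IsFiniteMeasureOnCompacts μ]
    [NormedAddCommGroup F] {f : X → F} (hf : Continuous f) (hsupp : HasCompactSupport f)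
    {p : ℝ} (hp : 0 < p) (s : Set X) :
    ENNReal.ofReal (∫ x in s, ‖f x‖ ^ p ∂μ) = ∫⁻ x in s, ‖f x‖ₑ ^ p ∂μ := by
  have hint : Integrable (fun x => ‖f x‖ ^ p) μ :=
    (hf.norm.rpow_const fun _ => .inr hp.le).integrable_of_hasCompactSupport
      (hsupp.comp_left (g := fun u : F => ‖u‖ ^ p) (by simp [Real.zero_rpow hp.ne']))
  rw [ofReal_integral_eq_lintegral_ofReal hint.integrableOn (.of_forall fun _ => by positivity)]
  simp_rw [ofReal_norm_rpow _ hp.le]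

theorem lintegral_Ioi_rpow_of_lt {a : ℝ} (ha : a < -1) {c : ℝ} (hc : 0 < c) :
    ∫⁻ t in Ioi c, ENNReal.ofReal (t ^ a) = ENNReal.ofReal (-c ^ (a + 1) / (a + 1)) := by
  rw [← integral_Ioi_rpow_of_lt ha hc, ofReal_integral_eq_lintegral_ofReal
    (integrableOn_Ioi_rpow_of_lt ha hc)]
  filter_upwards [ae_restrict_mem measurableSet_Ioi] with t ht
  exact Real.rpow_nonneg (hc.trans ht).le a

theorem lintegral_Ioi_rpow_neg_div_sub_one {p N r : ℝ} (hp : 1 < p) (hpN : p < N) (hr : 0 < r) :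
    ∫⁻ t in Ioi r, ENNReal.ofReal (t ^ (-((N - 1) / (p - 1)))) =
      ENNReal.ofReal ((p - 1) / (N - p) * r ^ ((p - N) / (p - 1))) := by
  have hp1 : 0 < p - 1 := sub_pos.mpr hp
  have hpN' : p - N ≠ 0 := sub_ne_zero.mpr hpN.ne
  have hNp' : N - p ≠ 0 := sub_ne_zero.mpr hpN.ne'
  have hb : -((N - 1) / (p - 1)) < -1 := by
    rw [neg_lt_neg_iff, lt_div_iff₀ hp1]; linarith
  have hexp : -((N - 1) / (p - 1)) + 1 = (p - N) / (p - 1) := by field_simp; ring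
  rw [lintegral_Ioi_rpow_of_lt hb hr, hexp]
  congr 1
  generalize r ^ ((p - N) / (p - 1)) = X
  field_simp
  ring

-- Hölder for the splitting `G t = (t ^ a * G t) * t ^ (-a)` with `a = (N - 1) / p`.
theorem rpow_lintegral_Ioi_le_weighted {p N r : ℝ} (hp : 1 < p)
    (hpN : p < N) (hr : 0 < r) {G : ℝ → ℝ≥0∞} (hG : AEMeasurable G (volume.restrict (Ioi r))) :
    (∫⁻ t in Ioi r, G t) ^ p ≤ ENNReal.ofReal (((p - 1) / (N - p)) ^ (p - 1) * r ^ (p - N)) *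
      ∫⁻ t in Ioi r, ENNReal.ofReal (t ^ (N - 1)) * G t ^ p := by
  have hp0 : 0 < p := zero_lt_one.trans hp
  have hp1 : 0 < p - 1 := sub_pos.mpr hp
  have hpq : p.HolderConjugate p.conjExponent := .conjExponent hp
  set q := p.conjExponent
  set a := (N - 1) / p
  have hq : q = p / (p - 1) := rfl
  have haq : -a * q = -((N - 1) / (p - 1)) := by
    simp only [a, hq]; field_simp
  have hholder := ENNReal.lintegral_mul_le_Lp_mul_Lq (volume.restrict (Ioi r)) hpq
    (f := fun t => ENNReal.ofReal (t ^ a) * G t) (g := fun t => ENNReal.ofReal (t ^ (-a)))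
    ((measurable_id.pow_const a).ennreal_ofReal.aemeasurable.mul hG)
    (measurable_id.pow_const (-a)).ennreal_ofReal.aemeasurable
  have hprod : ∫⁻ t in Ioi r, ENNReal.ofReal (t ^ a) * G t * ENNReal.ofReal (t ^ (-a)) =
      ∫⁻ t in Ioi r, G t := by
    refine setLIntegral_congr_fun measurableSet_Ioi fun t ht => ?_
    have ht0 : 0 < t := hr.trans ht
    rw [mul_right_comm, ← ENNReal.ofReal_mul (by positivity), ← Real.rpow_add ht0,
      add_neg_cancel, Real.rpow_zero, ENNReal.ofReal_one, one_mul]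
  have hfirst : ∫⁻ t in Ioi r, (ENNReal.ofReal (t ^ a) * G t) ^ p =
      ∫⁻ t in Ioi r, ENNReal.ofReal (t ^ (N - 1)) * G t ^ p := by
    refine setLIntegral_congr_fun measurableSet_Ioi fun t ht => ?_
    have ht0 : 0 < t := hr.trans ht
    rw [ENNReal.mul_rpow_of_nonneg _ _ hp0.le,
      ENNReal.ofReal_rpow_of_nonneg (by positivity) hp0.le, ← Real.rpow_mul ht0.le,
      div_mul_cancel₀ _ hp0.ne']
  have hsecond : ∫⁻ t in Ioi r, ENNReal.ofReal (t ^ (-a)) ^ q =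
      ENNReal.ofReal ((p - 1) / (N - p) * r ^ ((p - N) / (p - 1))) := by
    rw [← lintegral_Ioi_rpow_neg_div_sub_one hp hpN hr]
    refine setLIntegral_congr_fun measurableSet_Ioi fun t ht => ?_
    rw [ENNReal.ofReal_rpow_of_nonneg (by positivity [hr.trans ht]) hpq.symm.nonneg,
      ← Real.rpow_mul (hr.trans ht).le, haq]
  calc (∫⁻ t in Ioi r, G t) ^ p
      ≤ ((∫⁻ t in Ioi r, ENNReal.ofReal (t ^ (N - 1)) * G t ^ p) ^ (1 / p) *
          ENNReal.ofReal ((p - 1) / (N - p) * r ^ ((p - N) / (p - 1))) ^ (1 / q)) ^ p := by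
        rw [← hfirst, ← hsecond, ← hprod]
        exact ENNReal.rpow_le_rpow hholder hp0.le
    _ = _ := by
        rw [ENNReal.mul_rpow_of_nonneg _ _ hp0.le, ← ENNReal.rpow_mul, ← ENNReal.rpow_mul,
          one_div_mul_cancel hp0.ne', ENNReal.rpow_one, one_div_mul_eq_div, hpq.div_conj_eq_sub_one,
          ENNReal.ofReal_rpow_of_nonneg (by positivity) hp1.le, mul_comm,
          Real.mul_rpow (by positivity) (by positivity), ← Real.rpow_mul hr.le,
          div_mul_cancel₀ _ hp1.ne']

theorem enorm_le_lintegral_Ioi_enorm_fderiv {E : Type*} [NormedAddCommGroup E] [NormedSpace ℝ E]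
    {φ : E → ℝ} (hφ : ContDiff ℝ 1 φ) (hsupp : HasCompactSupport φ) {ω : E} (hω : ‖ω‖ = 1)
    (r : ℝ) : ‖φ (r • ω)‖ₑ ≤ ∫⁻ t in Ioi r, ‖fderiv ℝ φ (t • ω)‖ₑ := by
  have hω0 : ω ≠ 0 := norm_ne_zero_iff.mp (by simp [hω])
  set ψ : ℝ → ℝ := fun t => φ (t • ω)
  have hψ : ContDiff ℝ 1 ψ := hφ.comp (contDiff_id.smul contDiff_const)
  have hψsupp : HasCompactSupport ψ :=
    hsupp.comp_isClosedEmbedding (isClosedEmbedding_smul_left hω0)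
  have hderiv (t : ℝ) : deriv ψ t = fderiv ℝ φ (t • ω) ω := by
    have := (hφ.differentiable one_ne_zero (t • ω)).hasFDerivAt.comp_hasDerivAt t
      ((hasDerivAt_id t).smul_const ω)
    rw [one_smul] at this
    exact this.deriv
  calc ‖ψ r‖ₑ = ‖∫ t in Ioi r, deriv ψ t‖ₑ := by
        rw [hψsupp.integral_Ioi_deriv_eq hψ, enorm_neg]
    _ ≤ ∫⁻ t in Ioi r, ‖deriv ψ t‖ₑ := enorm_integral_le_lintegral_enorm _
    _ ≤ ∫⁻ t in Ioi r, ‖fderiv ℝ φ (t • ω)‖ₑ := by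
        refine lintegral_mono fun t => ?_
        rw [hderiv]
        have hω' : ‖ω‖ₑ = 1 := by rw [← ofReal_norm, hω, ENNReal.ofReal_one]
        simpa [hω'] using (fderiv ℝ φ (t • ω)).le_opENorm ω

section Ray

variable {E : Type*} [NormedAddCommGroup E] [NormedSpace ℝ E] {φ : E → ℝ} {ω : E} {N p : ℝ}

theorem enorm_rpow_le_mul_lintegral_Ioi_fderiv (hp : 1 < p) (hpN : p < N) (hφ : ContDiff ℝ 1 φ)
    (hsupp : HasCompactSupport φ) (hω : ‖ω‖ = 1) {r : ℝ} (hr : 0 < r) :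
    ‖φ (r • ω)‖ₑ ^ p ≤ ENNReal.ofReal (((p - 1) / (N - p)) ^ (p - 1) * r ^ (p - N)) *
      ∫⁻ t in Ioi r, ENNReal.ofReal (t ^ (N - 1)) * ‖fderiv ℝ φ (t • ω)‖ₑ ^ p := by
  have hmeas : Measurable fun t : ℝ => ‖fderiv ℝ φ (t • ω)‖ₑ :=
    ((hφ.continuous_fderiv one_ne_zero).comp (continuous_id.smul continuous_const)).enorm.measurable
  have hray := enorm_le_lintegral_Ioi_enorm_fderiv hφ hsupp hω r
  exact (ENNReal.rpow_le_rpow hray (by linarith)).trans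
    (rpow_lintegral_Ioi_le_weighted hp hpN hr hmeas.aemeasurable)

theorem lintegral_Ioi_weighted_hardy (hp : 1 < p) (hpN : p < N) {R : ℝ} (hR : 0 < R)
    {g : ℝ → ℝ} (hg : Measurable g) (hφ : ContDiff ℝ 1 φ) (hsupp : HasCompactSupport φ)
    (hω : ‖ω‖ = 1) :
    ∫⁻ r in Ioi R, ENNReal.ofReal (r ^ (N - 1)) * (ENNReal.ofReal (g r) * ‖φ (r • ω)‖ₑ ^ p) ≤
      ENNReal.ofReal (((p - 1) / (N - p)) ^ (p - 1)) *
        (∫⁻ r in Ioi R, ENNReal.ofReal (g r * r ^ (p - 1))) *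
        ∫⁻ t in Ioi R, ENNReal.ofReal (t ^ (N - 1)) * ‖fderiv ℝ φ (t • ω)‖ₑ ^ p := by
  set C := ((p - 1) / (N - p)) ^ (p - 1)
  set A := ∫⁻ t in Ioi R, ENNReal.ofReal (t ^ (N - 1)) * ‖fderiv ℝ φ (t • ω)‖ₑ ^ p
  have hpoint : ∀ r ∈ Ioi R,
      ENNReal.ofReal (r ^ (N - 1)) * (ENNReal.ofReal (g r) * ‖φ (r • ω)‖ₑ ^ p) ≤
        ENNReal.ofReal C * ENNReal.ofReal (g r * r ^ (p - 1)) * A := fun r hr => by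
    have hr0 : 0 < r := hR.trans hr
    have hweight : ENNReal.ofReal (r ^ (N - 1)) * ENNReal.ofReal (C * r ^ (p - N)) =
        ENNReal.ofReal C * ENNReal.ofReal (r ^ (p - 1)) := by
      rw [← ENNReal.ofReal_mul (by positivity), ← ENNReal.ofReal_mul (by positivity),
        mul_left_comm, ← Real.rpow_add hr0, sub_add_sub_cancel']
    calc ENNReal.ofReal (r ^ (N - 1)) * (ENNReal.ofReal (g r) * ‖φ (r • ω)‖ₑ ^ p)
        ≤ ENNReal.ofReal (r ^ (N - 1)) *
            (ENNReal.ofReal (g r) * (ENNReal.ofReal (C * r ^ (p - N)) * A)) := by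
          gcongr
          exact (enorm_rpow_le_mul_lintegral_Ioi_fderiv hp hpN hφ hsupp hω hr0).trans
            (by gcongr; exact lintegral_mono_set (Ioi_subset_Ioi (mem_Ioi.mp hr).le))
      _ = ENNReal.ofReal (g r) *
            (ENNReal.ofReal (r ^ (N - 1)) * ENNReal.ofReal (C * r ^ (p - N))) * A := by ring
      _ = ENNReal.ofReal C * ENNReal.ofReal (g r * r ^ (p - 1)) * A := by
          rw [hweight, ENNReal.ofReal_mul' (by positivity)]
          ring
  calc _ ≤ ∫⁻ r in Ioi R, ENNReal.ofReal C * ENNReal.ofReal (g r * r ^ (p - 1)) * A :=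
        setLIntegral_mono' measurableSet_Ioi hpoint
    _ = _ := by
        rw [lintegral_mul_const _ (by fun_prop),
          lintegral_const_mul' _ _ ENNReal.ofReal_ne_top]

end Ray

section Polar

variable {E : Type*} [NormedAddCommGroup E] [NormedSpace ℝ E] [MeasurableSpace E] [BorelSpace E]
  [FiniteDimensional ℝ E] (μ : Measure E) [μ.IsAddHaarMeasure]

theorem lintegral_eq_lintegral_sphere_lintegral_Ioi [Nontrivial E] {f : E → ℝ≥0∞}
    (hf : Measurable f) :
    ∫⁻ x, f x ∂μ = ∫⁻ ω : sphere (0 : E) 1,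
      ∫⁻ r in Ioi (0 : ℝ), ENNReal.ofReal (r ^ (Module.finrank ℝ E - 1)) * f (r • (ω : E)) ∂volume
        ∂μ.toSphere := by
  have hg : Measurable fun y : sphere (0 : E) 1 × Ioi (0 : ℝ) =>
      f (((homeomorphUnitSphereProd E).symm y : ({0}ᶜ : Set E)) : E) :=
    hf.comp (continuous_subtype_val.comp (homeomorphUnitSphereProd E).symm.continuous).measurable
  calc ∫⁻ x, f x ∂μ = ∫⁻ x : ({0}ᶜ : Set E), f x ∂(μ.comap (↑)) := by
        rw [lintegral_subtype_comap (measurableSet_singleton 0).compl, restrict_compl_singleton]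
    _ = ∫⁻ y, f (((homeomorphUnitSphereProd E).symm y : ({0}ᶜ : Set E)) : E)
          ∂(μ.toSphere.prod (.volumeIoiPow (Module.finrank ℝ E - 1))) := by
        rw [← μ.measurePreserving_homeomorphUnitSphereProd.lintegral_comp hg]
        simp
    _ = _ := by
        rw [lintegral_prod _ hg.aemeasurable]
        refine lintegral_congr fun ω => ?_
        rw [Measure.volumeIoiPow, lintegral_withDensity_eq_lintegral_mul _
          (measurable_subtype_coe.pow_const _).ennreal_ofReal
          (g := fun y : Ioi (0 : ℝ) => f ((homeomorphUnitSphereProd E).symm (ω, y) : E))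
          (hg.comp measurable_prodMk_left), ← lintegral_subtype_comap measurableSet_Ioi]
        simp [mul_comm]

theorem setLIntegral_lt_norm_eq_lintegral_sphere_lintegral_Ioi [Nontrivial E] {R : ℝ}
    (hR : 0 ≤ R) {f : E → ℝ≥0∞} (hf : Measurable f) :
    ∫⁻ x in {x | R < ‖x‖}, f x ∂μ = ∫⁻ ω : sphere (0 : E) 1,
      ∫⁻ r in Ioi R, ENNReal.ofReal (r ^ ((Module.finrank ℝ E : ℝ) - 1)) * f (r • (ω : E)) ∂volume
        ∂μ.toSphere := by
  have hS : MeasurableSet {x : E | R < ‖x‖} := measurableSet_lt measurable_const measurable_norm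
  rw [← lintegral_indicator hS, lintegral_eq_lintegral_sphere_lintegral_Ioi μ (hf.indicator hS)]
  refine lintegral_congr fun ω => ?_
  have hnorm : ∀ r ∈ Ioi (0 : ℝ), ‖r • (ω : E)‖ = r := fun r hr => by
    rw [norm_smul, mem_sphere_zero_iff_norm.mp ω.2, mul_one, Real.norm_of_nonneg (le_of_lt hr)]
  have hind : ∀ r ∈ Ioi (0 : ℝ),
      ENNReal.ofReal (r ^ (Module.finrank ℝ E - 1)) *
          {x : E | R < ‖x‖}.indicator f (r • (ω : E)) =
        (Ioi R).indicator (fun r => ENNReal.ofReal (r ^ ((Module.finrank ℝ E : ℝ) - 1)) *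
          f (r • (ω : E))) r := fun r hr => by
    have hdim : 1 ≤ Module.finrank ℝ E := Module.finrank_pos
    rw [← Real.rpow_natCast, Nat.cast_sub hdim, Nat.cast_one]
    by_cases h : R < r <;> simp [indicator, hnorm r hr, h]
  rw [setLIntegral_congr_fun measurableSet_Ioi hind, lintegral_indicator measurableSet_Ioi,
    Measure.restrict_restrict measurableSet_Ioi, Ioi_inter_Ioi, sup_of_le_left hR]

theorem setLIntegral_lt_norm_weighted_hardy {p : ℝ} (hp : 1 < p)
    (hpE : p < Module.finrank ℝ E) {R : ℝ} (hR : 0 < R) {g : ℝ → ℝ} (hg : Measurable g)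
    {φ : E → ℝ} (hφ : ContDiff ℝ 1 φ) (hsupp : HasCompactSupport φ) :
    ∫⁻ x in {x | R < ‖x‖}, ENNReal.ofReal (g ‖x‖) * ‖φ x‖ₑ ^ p ∂μ ≤
      ENNReal.ofReal (((p - 1) / (Module.finrank ℝ E - p)) ^ (p - 1)) *
        (∫⁻ r in Ioi R, ENNReal.ofReal (g r * r ^ (p - 1))) *
        ∫⁻ x in {x | R < ‖x‖}, ‖fderiv ℝ φ x‖ₑ ^ p ∂μ := by
  have : Nontrivial E := Module.nontrivial_of_finrank_pos (R := ℝ) (by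
    exact_mod_cast (zero_lt_one.trans hp).trans hpE)
  have hφc : Continuous φ := hφ.continuous
  have hfderiv : Continuous (fderiv ℝ φ) := hφ.continuous_fderiv one_ne_zero
  rw [setLIntegral_lt_norm_eq_lintegral_sphere_lintegral_Ioi μ hR.le (by fun_prop),
    setLIntegral_lt_norm_eq_lintegral_sphere_lintegral_Ioi μ hR.le (by fun_prop),
    ← lintegral_const_mul _ (Measurable.lintegral_prod_right (by fun_prop))]
  refine lintegral_mono fun ω => Eq.trans_le ?_ (lintegral_Ioi_weighted_hardy hp hpE
    hR hg hφ hsupp (mem_sphere_zero_iff_norm.mp ω.2))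
  refine setLIntegral_congr_fun measurableSet_Ioi fun r hr => ?_
  rw [norm_smul_of_nonneg (hR.trans hr).le, mem_sphere_zero_iff_norm.mp ω.2, mul_one]

end Polar

theorem weighted_hardy_exterior_subcritical (N : ℕ) (p : ℝ) (hp : 1 < p) (hpN : p < N)
    (g : ℝ → ℝ) (hg0 : ∀ r, 1 < r → 0 ≤ g r)
    (hgmeas : Measurable g)
    (hgint : IntegrableOn (fun r => g r * r ^ (p - 1)) (Ioi 1))
    (φ : EuclideanSpace ℝ (Fin N) → ℝ)
    (hφ : ContDiff ℝ 1 φ) (hsupp : HasCompactSupport φ) :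
    ∫⁻ x in {x : EuclideanSpace ℝ (Fin N) | 1 < ‖x‖},
        ENNReal.ofReal (g ‖x‖ * |φ x| ^ p) ≤
      ENNReal.ofReal (((p - 1) / (N - p)) ^ (p - 1) *
          (∫ r in Ioi (1 : ℝ), g r * r ^ (p - 1)) *
        ∫ x in {x : EuclideanSpace ℝ (Fin N) | 1 < ‖x‖}, ‖fderiv ℝ φ x‖ ^ p) := by
  have hdim : Module.finrank ℝ (EuclideanSpace ℝ (Fin N)) = N := by simp
  have hp0 : 0 < p := by linarith
  have hC : 0 ≤ ((p - 1) / (N - p)) ^ (p - 1) :=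
    Real.rpow_nonneg (div_nonneg (by linarith) (by linarith)) _
  have hgr : ∀ r ∈ Ioi (1 : ℝ), 0 ≤ g r * r ^ (p - 1) := fun r hr =>
    mul_nonneg (hg0 r hr) (by positivity [zero_lt_one.trans (mem_Ioi.mp hr)])
  have hhardy := setLIntegral_lt_norm_weighted_hardy volume hp (by rwa [hdim]) one_pos
    hgmeas hφ hsupp
  rw [hdim] at hhardy
  calc _ = ∫⁻ x in {x : EuclideanSpace ℝ (Fin N) | 1 < ‖x‖},
        ENNReal.ofReal (g ‖x‖) * ‖φ x‖ₑ ^ p := by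
        refine setLIntegral_congr_fun (measurableSet_lt measurable_const measurable_norm)
          fun x hx => ?_
        rw [ENNReal.ofReal_mul (hg0 _ hx), ← Real.norm_eq_abs, ofReal_norm_rpow _ hp0.le]
    _ ≤ _ := hhardy
    _ = _ := by
        rw [ENNReal.ofReal_mul (mul_nonneg hC (setIntegral_nonneg measurableSet_Ioi hgr)),
          ENNReal.ofReal_mul hC, ofReal_integral_eq_lintegral_ofReal hgint
            (ae_restrict_of_forall_mem measurableSet_Ioi hgr),
          (hφ.continuous_fderiv one_ne_zero).ofReal_setIntegral_norm_rpow (hsupp.fderiv ℝ) hp0]
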